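/- If x is a positive integer that is smaller than every prime factor of a₁ and x ≤ a₁ − 1, then ω_x ≤ x·ω₁. -/

import Mathlib

/-!
Every element `s` of `S` dominates the Apéry element `w ≤ s` of its residue class modulo `a₁`,
and distinct Apéry elements lie in distinct classes. Since every prime factor of `a₁` exceeds `x`
and `a₁ ∤ ω₁`, the multiples `0, ω₁, …, x ω₁` are pairwise incongruent modulo `a₁`, so they
dominate `x + 1` distinct Apéry elements, all at most `x ω₁`. Among the indices of `x + 1`
distinct elements of the increasingly enumerated Apéry set one is at least `x`, hence
`ω_x ≤ x ω₁`.
-/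

open Finset

section Apery

variable (S : AddSubmonoid ℕ) (n : ℕ)

def apery : Set ℕ := {w | w ∈ S ∧ ¬ ∃ s ∈ S, s + n = w}

variable {S n}

theorem zero_mem_apery (hn : 0 < n) : 0 ∈ apery S n :=
  ⟨S.zero_mem, fun ⟨s, _, hs⟩ => by omega⟩

theorem exists_mem_apery_le_modEq (hn : 0 < n) {s : ℕ} (hs : s ∈ S) :
    ∃ w ∈ apery S n, w ≤ s ∧ w ≡ s [MOD n] := by
  induction s using Nat.strong_induction_on with
  | _ s ih =>
    by_cases hsA : s ∈ apery S n
    · exact ⟨s, hsA, le_rfl, rfl⟩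
    · obtain ⟨t, htS, rfl⟩ : ∃ t ∈ S, t + n = s := by
        simpa [apery, hs] using hsA
      obtain ⟨w, hwA, hwt, hwmod⟩ := ih t (by omega) htS
      exact ⟨w, hwA, by omega, hwmod.trans (Nat.add_modEq_right).symm⟩

theorem eq_of_mem_apery_of_modEq (hnS : n ∈ S) {w w' : ℕ} (hw : w ∈ apery S n)
    (hw' : w' ∈ apery S n) (hmod : w ≡ w' [MOD n]) : w = w' := by
  wlog hle : w ≤ w' generalizing w w'
  · exact (this hw' hw hmod.symm (by omega)).symm
  obtain ⟨k, hk⟩ := (Nat.modEq_iff_dvd' hle).mp hmod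
  rcases k with _ | k
  · omega
  · refine absurd ⟨w + k • n, S.add_mem hw.1 (S.nsmul_mem hnS k), ?_⟩ hw'.2
    rw [smul_eq_mul]
    linarith [Nat.sub_add_cancel hle, mul_add n k 1]

end Apery

theorem modEq_mul_right_inj_of_lt_primeFactors {n b x k k' : ℕ}
    (hx : ∀ p : ℕ, p.Prime → p ∣ n → x < p) (hb : ¬ n ∣ b) (hk : k ≤ x) (hk' : k' ≤ x)
    (hmod : k * b ≡ k' * b [MOD n]) : k = k' := by
  wlog hle : k ≤ k' generalizing k k'
  · exact (this hk' hk hmod.symm (by omega)).symm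
  have hdvd : n ∣ (k' - k) * b := by
    rw [Nat.sub_mul]
    exact (Nat.modEq_iff_dvd' (Nat.mul_le_mul_right b hle)).mp hmod
  by_contra hne
  have hcop : n.Coprime (k' - k) := Nat.coprime_of_dvd fun p hp hpn hpe =>
    (hx p hp hpn).not_ge ((Nat.le_of_dvd (by omega) hpe).trans (by omega))
  exact hb (hcop.dvd_of_dvd_mul_left hdvd)

theorem exists_finset_apery_card_eq_of_lt_primeFactors {S : AddSubmonoid ℕ} {n b x : ℕ}
    (hn : 0 < n) (hbS : b ∈ S) (hb : ¬ n ∣ b)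
    (hx : ∀ p : ℕ, p.Prime → p ∣ n → x < p) :
    ∃ T : Finset ℕ, ↑T ⊆ apery S n ∧ T.card = x + 1 ∧ ∀ t ∈ T, t ≤ x * b := by
  choose w hwA hwle hwmod using fun k : ℕ =>
    exists_mem_apery_le_modEq hn (S.nsmul_mem hbS k)
  simp only [smul_eq_mul] at hwle hwmod
  refine ⟨(range (x + 1)).image w, ?_, ?_, ?_⟩
  · simpa [Set.subset_def] using fun k _ => hwA k
  · rw [card_image_of_injOn, card_range]
    intro k hk k' hk' hkk'
    simp only [coe_range, Set.mem_Iio] at hk hk'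
    refine modEq_mul_right_inj_of_lt_primeFactors hx hb (by omega) (by omega) ?_
    exact (hwmod k).symm.trans (hkk' ▸ hwmod k')
  · simp only [mem_image, mem_range, forall_exists_index, and_imp]
    rintro _ k hk rfl
    exact (hwle k).trans (Nat.mul_le_mul_right b (by omega))

theorem StrictMonoOn.apply_le_of_lt_card {ω : ℕ → ℕ} {n x B : ℕ}
    (hω : StrictMonoOn ω (Set.Iio n)) {T : Finset ℕ} (hT : ↑T ⊆ ω '' Set.Iio n)
    (hcard : x < T.card) (hB : ∀ t ∈ T, t ≤ B) : ω x ≤ B := by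
  by_contra! hlt
  have hsub : T ⊆ (range x).image ω := by
    intro t ht
    obtain ⟨i, hi, rfl⟩ := hT ht
    refine mem_image.mpr ⟨i, mem_range.mpr ?_, rfl⟩
    by_contra! hxi
    have hxn : x ∈ Set.Iio n := lt_of_le_of_lt hxi hi
    exact absurd (hω.monotoneOn hxn hi hxi) (by linarith [hB _ ht])
  linarith [card_le_card hsub, card_image_le (s := range x) (f := ω), card_range x]

theorem stmt5
    (d : ℕ) (hd : 2 ≤ d)
    (a : Fin d → ℕ)
    (ha_pos : ∀ i, 0 < a i)
    (a1 : ℕ) (ha1 : a1 = a ⟨0, by omega⟩)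
    (S : Set ℕ)
    (hS : S = {m : ℕ | ∃ c : Fin d → ℕ, m = ∑ i, c i * a i})
    (ω : ℕ → ℕ)
    (hω_mono : ∀ i j : ℕ, i < j → j < a1 → ω i < ω j)
    (hω_range : ω '' Set.Iio a1 = {w ∈ S | ¬ ∃ s ∈ S, s + a1 = w})
    (x : ℕ) (hx : 0 < x) (hxp : ∀ p : ℕ, p.Prime → p ∣ a1 → x < p)
    (hxa : x ≤ a1 - 1)
    :
    ω x ≤ x * ω 1 := by
  set M := (Submodule.span ℕ (Set.range a)).toAddSubmonoid
  have hSM : S = M := by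
    ext m
    simp [hS, M, Submodule.mem_span_range_iff_exists_fun, eq_comm]
  subst hSM
  have ha1M : a1 ∈ M := ha1 ▸ Submodule.subset_span (Set.mem_range_self _)
  have ha1pos : 0 < a1 := ha1 ▸ ha_pos _
  have hωmono : StrictMonoOn ω (Set.Iio a1) := fun i _ j hj hij => hω_mono i j hij hj
  have hAp : ω '' Set.Iio a1 = apery M a1 := hω_range
  have hω1A : ω 1 ∈ apery M a1 := hAp ▸ Set.mem_image_of_mem ω (show 1 < a1 by omega)
  have hω1 : ¬ a1 ∣ ω 1 := fun hdvd =>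
    absurd (eq_of_mem_apery_of_modEq ha1M (zero_mem_apery ha1pos) hω1A
      (Nat.modEq_zero_iff_dvd.mpr hdvd).symm)
      (by linarith [hω_mono 0 1 one_pos (by omega)])
  obtain ⟨T, hTA, hTcard, hTle⟩ :=
    exists_finset_apery_card_eq_of_lt_primeFactors ha1pos hω1A.1 hω1 hxp
  exact hωmono.apply_le_of_lt_card (hAp ▸ hTA) (by omega) hTle
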